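/- arXiv:2011.08290 — 3 statements merged into one kernel-verified Lean document; each statement's English description precedes it below -/
import Mathlib

section
/- Let W be an n×n real matrix with nonnegative entries, all row sums equal to 1, and all entries bounded by C/n for some constant C > 0. Let 0 ≤ ρ < 1 and suppose I − ρW is invertible, and set Z_ρ = W(I − ρW)^{-1}. Then Tr(Z_ρ Z_ρᵀ) ≤ C/(1−ρ)². -/
/-! The resolvent `(I - ρW)⁻¹` of a row-stochastic `W` exists by strict diagonal dominance, is
entrywise nonnegative by a discrete minimum principle for `v = b + ρ W v`, and has all row sums
`1/(1-ρ)`. Hence `Z = W (I - ρW)⁻¹` is nonnegative with row sums `1/(1-ρ)`, and, since `Z` also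
equals `(I - ρW)⁻¹ W`, its entries are at most `(C/n)/(1-ρ)`. So
`Tr(Z Zᵀ) = ∑ Z_ij² ≤ max Z_ij · ∑ Z_ij ≤ n · (C/n)/(1-ρ) · 1/(1-ρ)`. -/

open Matrix Finset

namespace Matrix

theorem trace_mul_transpose_self {m n R : Type*} [Fintype m] [Fintype n] [Semiring R]
    (A : Matrix m n R) : (A * Aᵀ).trace = ∑ i, ∑ j, A i j ^ 2 := by
  simp only [trace, diag_apply, mul_apply, transpose_apply, sq]

theorem sum_sq_le_card_mul {m n : Type*} [Fintype m] [Fintype n] {Z : Matrix m n ℝ} {b s : ℝ}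
    (hZ : ∀ i j, 0 ≤ Z i j) (hb : ∀ i j, Z i j ≤ b) (hb0 : 0 ≤ b) (hs : ∀ i, ∑ j, Z i j ≤ s) :
    ∑ i, ∑ j, Z i j ^ 2 ≤ Fintype.card m * (b * s) := by
  have hrow : ∀ i, ∑ j, Z i j ^ 2 ≤ b * s := fun i =>
    calc ∑ j, Z i j ^ 2 ≤ ∑ j, b * Z i j :=
          sum_le_sum fun j _ => by rw [sq]; exact mul_le_mul_of_nonneg_right (hb i j) (hZ i j)
      _ = b * ∑ j, Z i j := (mul_sum ..).symm
      _ ≤ b * s := mul_le_mul_of_nonneg_left (hs i) hb0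
  simpa using sum_le_card_nsmul univ _ _ fun i _ => hrow i

variable {ι : Type*} [Fintype ι] [DecidableEq ι] {W : Matrix ι ι ℝ} {ρ : ℝ}

theorem isUnit_one_sub_smul_of_mem_rowStochastic (hW : W ∈ rowStochastic ℝ ι) (hρ : |ρ| < 1) :
    IsUnit (1 - ρ • W) := by
  rw [isUnit_iff_isUnit_det, isUnit_iff_ne_zero]
  refine det_ne_zero_of_sum_row_lt_diag fun k => ?_
  have hoff : ∑ j ∈ univ.erase k, ‖(1 - ρ • W) k j‖ = |ρ| * (1 - W k k) := by
    rw [← sum_row_of_mem_rowStochastic hW k, ← add_sum_erase _ _ (mem_univ k), add_sub_cancel_left,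
      mul_sum]
    refine sum_congr rfl fun j hj => ?_
    simp [one_apply_ne' (ne_of_mem_erase hj), abs_of_nonneg (hW.1 k j)]
  have hdiag : 1 - |ρ| * W k k ≤ ‖(1 - ρ • W) k k‖ := by
    simp only [sub_apply, one_apply_eq, smul_apply, smul_eq_mul, Real.norm_eq_abs]
    refine le_trans ?_ (le_abs_self _)
    nlinarith [le_abs_self ρ, hW.1 k k]
  rw [hoff]
  linarith

theorem nonneg_of_eq_add_smul_mulVec (hW : W ∈ rowStochastic ℝ ι) (hρ0 : 0 ≤ ρ) (hρ1 : ρ < 1)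
    {b v : ι → ℝ} (hb : 0 ≤ b) (hv : v = b + ρ • W *ᵥ v) : 0 ≤ v := by
  intro i
  have : Nonempty ι := ⟨i⟩
  obtain ⟨i₀, hi₀⟩ := Finite.exists_min v
  have hmean : v i₀ ≤ (W *ᵥ v) i₀ :=
    calc v i₀ = ∑ k, W i₀ k * v i₀ := by rw [← sum_mul, sum_row_of_mem_rowStochastic hW, one_mul]
      _ ≤ (W *ᵥ v) i₀ := sum_le_sum fun k _ => mul_le_mul_of_nonneg_left (hi₀ k) (hW.1 i₀ k)
  have hvi₀ : v i₀ = b i₀ + ρ * (W *ᵥ v) i₀ := congrFun hv i₀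
  have hgap : 0 ≤ (1 - ρ) * v i₀ := by
    have : (0 : ℝ) ≤ b i₀ := hb i₀
    nlinarith [mul_le_mul_of_nonneg_left hmean hρ0]
  exact (nonneg_of_mul_nonneg_right hgap (sub_pos.2 hρ1)).trans (hi₀ i)

theorem inv_one_sub_smul_mulVec_nonneg (hW : W ∈ rowStochastic ℝ ι) (hρ0 : 0 ≤ ρ) (hρ1 : ρ < 1)
    {b : ι → ℝ} (hb : 0 ≤ b) : 0 ≤ (1 - ρ • W)⁻¹ *ᵥ b := by
  have hunit := isUnit_one_sub_smul_of_mem_rowStochastic hW (abs_lt.2 ⟨by linarith, hρ1⟩)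
  have hsolve : (1 - ρ • W) *ᵥ ((1 - ρ • W)⁻¹ *ᵥ b) = b := by
    rw [mulVec_mulVec, mul_nonsing_inv _ ((isUnit_iff_isUnit_det _).1 hunit), one_mulVec]
  rw [sub_mulVec, one_mulVec, smul_mulVec] at hsolve
  exact nonneg_of_eq_add_smul_mulVec hW hρ0 hρ1 hb (eq_add_of_sub_eq hsolve)

theorem inv_one_sub_smul_nonneg (hW : W ∈ rowStochastic ℝ ι) (hρ0 : 0 ≤ ρ) (hρ1 : ρ < 1)
    (i j : ι) : 0 ≤ (1 - ρ • W)⁻¹ i j := by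
  simpa [mulVec_single_one] using
    inv_one_sub_smul_mulVec_nonneg hW hρ0 hρ1 (Pi.single_nonneg.2 zero_le_one) i

theorem mul_inv_one_sub_smul_nonneg (hW : W ∈ rowStochastic ℝ ι) (hρ0 : 0 ≤ ρ) (hρ1 : ρ < 1)
    (i j : ι) : 0 ≤ (W * (1 - ρ • W)⁻¹) i j := by
  rw [mul_apply]
  exact sum_nonneg fun k _ => mul_nonneg (hW.1 i k) (inv_one_sub_smul_nonneg hW hρ0 hρ1 k j)

theorem inv_one_sub_smul_mulVec_one (hW : W *ᵥ 1 = 1) (hunit : IsUnit (1 - ρ • W)) (hρ : ρ ≠ 1) :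
    (1 - ρ • W)⁻¹ *ᵥ 1 = (1 - ρ)⁻¹ • 1 := by
  have hone : (1 - ρ • W) *ᵥ 1 = (1 - ρ) • 1 := by
    rw [sub_mulVec, one_mulVec, smul_mulVec, hW, sub_smul, one_smul]
  rw [eq_inv_smul_iff₀ (sub_ne_zero.2 hρ.symm), ← mulVec_smul, ← hone, mulVec_mulVec,
    nonsing_inv_mul _ ((isUnit_iff_isUnit_det _).1 hunit), one_mulVec]

theorem mul_inv_one_sub_smul_mulVec_one (hW : W *ᵥ 1 = 1) (hunit : IsUnit (1 - ρ • W))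
    (hρ : ρ ≠ 1) : (W * (1 - ρ • W)⁻¹) *ᵥ 1 = (1 - ρ)⁻¹ • 1 := by
  rw [← mulVec_mulVec, inv_one_sub_smul_mulVec_one hW hunit hρ, mulVec_smul, hW]

theorem commute_inv_one_sub_smul (hunit : IsUnit (1 - ρ • W)) : Commute W (1 - ρ • W)⁻¹ := by
  rw [← hunit.unit_spec, ← coe_units_inv]
  exact ((Commute.one_right W).sub_right ((Commute.refl W).smul_right ρ)).units_inv_right

theorem mul_inv_one_sub_smul_apply_le (hW : W ∈ rowStochastic ℝ ι) (hρ0 : 0 ≤ ρ) (hρ1 : ρ < 1)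
    {c : ℝ} (hc : ∀ i j, W i j ≤ c) (i j : ι) : (W * (1 - ρ • W)⁻¹) i j ≤ c * (1 - ρ)⁻¹ := by
  have hunit := isUnit_one_sub_smul_of_mem_rowStochastic hW (abs_lt.2 ⟨by linarith, hρ1⟩)
  have hrow := congrFun (inv_one_sub_smul_mulVec_one hW.2 hunit hρ1.ne) i
  simp only [mulVec, dotProduct, Pi.one_apply, mul_one, Pi.smul_apply, smul_eq_mul] at hrow
  rw [(commute_inv_one_sub_smul hunit).eq, mul_apply, ← hrow, mul_sum]
  refine sum_le_sum fun k _ => ?_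
  rw [mul_comm c]
  exact mul_le_mul_of_nonneg_left (hc k j) (inv_one_sub_smul_nonneg hW hρ0 hρ1 i k)

end Matrix

theorem trace_Z_Zt_le_general (n : ℕ) (W : Matrix (Fin n) (Fin n) ℝ)
    (C : ℝ) (hC : 0 < C)
    (hnonneg : ∀ i j, 0 ≤ W i j)
    (hrow : ∀ i, ∑ j, W i j = 1)
    (hbound : ∀ i j, W i j ≤ C / n)
    (ρ : ℝ) (hρ0 : 0 ≤ ρ) (hρ1 : ρ < 1) :
    ((W * (1 - ρ • W)⁻¹) * (W * (1 - ρ • W)⁻¹)ᵀ).trace ≤ C / (1 - ρ) ^ 2 := by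
  have hW : W ∈ rowStochastic ℝ (Fin n) := mem_rowStochastic_iff_sum.2 ⟨hnonneg, hrow⟩
  have hunit := isUnit_one_sub_smul_of_mem_rowStochastic hW (abs_lt.2 ⟨by linarith, hρ1⟩)
  have hZrow := mul_inv_one_sub_smul_mulVec_one hW.2 hunit hρ1.ne
  set Z := W * (1 - ρ • W)⁻¹
  have hZsum : ∀ i, ∑ j, Z i j ≤ (1 - ρ)⁻¹ := fun i => by
    simpa [mulVec, dotProduct] using (congrFun hZrow i).le
  calc (Z * Zᵀ).trace = ∑ i, ∑ j, Z i j ^ 2 := trace_mul_transpose_self Z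
    _ ≤ n * (C / n * (1 - ρ)⁻¹ * (1 - ρ)⁻¹) := by
        simpa using sum_sq_le_card_mul (mul_inv_one_sub_smul_nonneg hW hρ0 hρ1)
          (mul_inv_one_sub_smul_apply_le hW hρ0 hρ1 hbound) (by positivity) hZsum
    _ = n * (C / n) / (1 - ρ) ^ 2 := by rw [div_eq_mul_inv _ ((1 - ρ) ^ 2), ← inv_pow]; ring
    _ ≤ C / (1 - ρ) ^ 2 := by
        gcongr
        rcases n.eq_zero_or_pos with rfl | hn
        · simpa using hC.le
        · rw [mul_div_cancel₀ _ (by positivity)]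

/-- If W is row-stochastic with all entries at most C/n, 0 ≤ ρ < 1, and I − ρW is
invertible, then Z_ρ = W(I − ρW)⁻¹ satisfies Tr(Z_ρ Z_ρᵀ) ≤ C/(1−ρ)². -/
theorem trace_Z_Zt_le (n : ℕ) (W : Matrix (Fin n) (Fin n) ℝ)
    (C : ℝ) (hC : 0 < C)
    (hnonneg : ∀ i j, 0 ≤ W i j)
    (hrow : ∀ i, ∑ j, W i j = 1)
    (hbound : ∀ i j, W i j ≤ C / n)
    (ρ : ℝ) (hρ0 : 0 ≤ ρ) (hρ1 : ρ < 1)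
    (hinv : IsUnit (1 - ρ • W)) :
    ((W * (1 - ρ • W)⁻¹) * (W * (1 - ρ • W)⁻¹)ᵀ).trace ≤ C / (1 - ρ) ^ 2 :=
  trace_Z_Zt_le_general n W C hC hnonneg hrow hbound ρ hρ0 hρ1
end

section
/- Let n ≥ 2, let W = (n−1)^{-1}(𝟙𝟙ᵀ − I) be the row-normalized weight matrix of the complete graph on n vertices, and let H_* = n^{-1} 𝟙𝟙ᵀ. Let ρ ∈ ℝ with ρ ≠ 1 and ρ ≠ −(n−1). Then I − ρW is invertible, Z_ρ := W(I − ρW)^{-1} = (1−ρ)^{-1} H_* − (n−1+ρ)^{-1}(I − H_*), and Tr(Z_ρ² + Z_ρ Z_ρᵀ) = 2[ 1/(1−ρ)² + (n−1)/(n−1+ρ)² ]. -/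
open Matrix

/-!
The averaging matrix `H = n⁻¹ 𝟙𝟙ᵀ` is a symmetric idempotent with trace `1`, and
`W = H - (n-1)⁻¹ (I - H)`. Combinations `a H + b (I - H)` multiply coordinatewise, so
`I - ρW`, its inverse and `Z_ρ` are all such combinations, and the trace of
`Z_ρ² + Z_ρZ_ρᵀ = 2 Z_ρ²` is read off from `tr H = 1` and `tr (I - H) = n - 1`.
-/

namespace IsIdempotentElem

variable {A : Type*} [Ring A] {P : A}

theorem smul_add_smul_one_sub_mul {R : Type*} [CommRing R] [Algebra R A]
    (hP : IsIdempotentElem P) (a b c d : R) :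
    (a • P + b • (1 - P)) * (c • P + d • (1 - P)) = (a * c) • P + (b * d) • (1 - P) := by
  simp only [add_mul, mul_add, smul_mul_smul, hP.eq, hP.one_sub.eq, hP.mul_one_sub_self,
    hP.one_sub_mul_self, smul_zero, add_zero, zero_add]

variable {K : Type*} [Field K] [Algebra K A]

theorem smul_add_smul_one_sub_mul_inv (hP : IsIdempotentElem P) {a b : K} (ha : a ≠ 0)
    (hb : b ≠ 0) : (a • P + b • (1 - P)) * (a⁻¹ • P + b⁻¹ • (1 - P)) = 1 := by
  rw [hP.smul_add_smul_one_sub_mul, mul_inv_cancel₀ ha, mul_inv_cancel₀ hb, one_smul, one_smul,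
    add_sub_cancel]

theorem isUnit_smul_add_smul_one_sub (hP : IsIdempotentElem P) {a b : K} (ha : a ≠ 0)
    (hb : b ≠ 0) : IsUnit (a • P + b • (1 - P)) := by
  refine ⟨⟨_, _, hP.smul_add_smul_one_sub_mul_inv ha hb, ?_⟩, rfl⟩
  simpa using hP.smul_add_smul_one_sub_mul_inv (inv_ne_zero ha) (inv_ne_zero hb)

end IsIdempotentElem

namespace Matrix

variable {ι K : Type*} [Fintype ι] [Field K]

theorem isIdempotentElem_inv_card_smul_of_one (hι : (Fintype.card ι : K) ≠ 0) :
    IsIdempotentElem ((Fintype.card ι : K)⁻¹ • of fun _ _ : ι => (1 : K)) := by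
  ext i j
  simp [mul_apply]
  field_simp

theorem isSymm_inv_card_smul_of_one :
    ((Fintype.card ι : K)⁻¹ • of fun _ _ : ι => (1 : K)).IsSymm := by
  ext i j
  simp

theorem trace_inv_card_smul_of_one (hι : (Fintype.card ι : K) ≠ 0) :
    ((Fintype.card ι : K)⁻¹ • of fun _ _ : ι => (1 : K)).trace = 1 := by
  simp [trace, hι]

variable [DecidableEq ι]

theorem IsIdempotentElem.inv_smul_add_smul_one_sub {P : Matrix ι ι K} (hP : IsIdempotentElem P)
    {a b : K} (ha : a ≠ 0) (hb : b ≠ 0) :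
    (a • P + b • (1 - P))⁻¹ = a⁻¹ • P + b⁻¹ • (1 - P) :=
  inv_eq_right_inv (hP.smul_add_smul_one_sub_mul_inv ha hb)

theorem trace_smul_add_smul_one_sub (P : Matrix ι ι K) (a b : K) :
    (a • P + b • (1 - P)).trace = a * P.trace + b * (Fintype.card ι - P.trace) := by
  simp [trace_add, trace_sub]

end Matrix

/-- For the complete graph on n ≥ 2 vertices with W = (n−1)⁻¹(𝟙𝟙ᵀ − I) and
H_* = n⁻¹𝟙𝟙ᵀ, and ρ ≠ 1, ρ ≠ −(n−1): I − ρW is invertible,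
Z_ρ = W(I − ρW)⁻¹ = (1−ρ)⁻¹H_* − (n−1+ρ)⁻¹(I − H_*), and
Tr(Z_ρ² + Z_ρZ_ρᵀ) = 2[1/(1−ρ)² + (n−1)/(n−1+ρ)²]. -/
theorem complete_graph_Z_trace (n : ℕ) (hn : 2 ≤ n)
    (W H Z : Matrix (Fin n) (Fin n) ℝ)
    (hW : W = ((n : ℝ) - 1)⁻¹ • (Matrix.of (fun _ _ : Fin n => (1 : ℝ)) - 1))
    (hH : H = (n : ℝ)⁻¹ • Matrix.of (fun _ _ : Fin n => (1 : ℝ)))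
    (ρ : ℝ) (hρ1 : ρ ≠ 1) (hρ2 : ρ ≠ -((n : ℝ) - 1))
    (hZ : Z = W * (1 - ρ • W)⁻¹) :
    IsUnit (1 - ρ • W) ∧
    Z = (1 - ρ)⁻¹ • H - ((n : ℝ) - 1 + ρ)⁻¹ • (1 - H) ∧
    (Z * Z + Z * Zᵀ).trace
      = 2 * (1 / (1 - ρ) ^ 2 + ((n : ℝ) - 1) / ((n : ℝ) - 1 + ρ) ^ 2) := by
  have hn0 : (n : ℝ) ≠ 0 := by positivity
  have hn1 : (n : ℝ) - 1 ≠ 0 := by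
    have : (2 : ℝ) ≤ n := by exact_mod_cast hn
    linarith
  have h1ρ : 1 - ρ ≠ 0 := sub_ne_zero.2 hρ1.symm
  have hnρ : (n : ℝ) - 1 + ρ ≠ 0 := fun h => hρ2 (by linarith)
  have hcard : (Fintype.card (Fin n) : ℝ) ≠ 0 := by simpa using hn0
  have hHid : IsIdempotentElem H := by simpa [hH] using isIdempotentElem_inv_card_smul_of_one hcard
  have hHsymm : H.IsSymm := by simpa [hH] using isSymm_inv_card_smul_of_one (ι := Fin n) (K := ℝ)
  have htrH : H.trace = 1 := by simpa [hH] using trace_inv_card_smul_of_one hcard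
  have hW' : W = (1 : ℝ) • H + (-((n : ℝ) - 1)⁻¹) • (1 - H) := by
    rw [hW, show of (fun _ _ : Fin n => (1 : ℝ)) = (n : ℝ) • H by
      rw [hH, smul_smul, mul_inv_cancel₀ hn0, one_smul]]
    match_scalars <;> field_simp
    ring
  have hA : 1 - ρ • W = (1 - ρ) • H + (((n : ℝ) - 1 + ρ) / ((n : ℝ) - 1)) • (1 - H) := by
    rw [hW']
    match_scalars <;> field_simp <;> ring
  have hZ' : Z = (1 - ρ)⁻¹ • H + (-((n : ℝ) - 1 + ρ)⁻¹) • (1 - H) := by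
    rw [hZ, hA, hHid.inv_smul_add_smul_one_sub h1ρ (div_ne_zero hnρ hn1), hW',
      hHid.smul_add_smul_one_sub_mul, one_mul, inv_div]
    field_simp
  refine ⟨hA ▸ hHid.isUnit_smul_add_smul_one_sub h1ρ (div_ne_zero hnρ hn1),
    by rw [hZ', neg_smul, ← sub_eq_add_neg], ?_⟩
  have hZsymm : Zᵀ = Z := by
    rw [hZ']
    exact ((hHsymm.smul _).add ((isSymm_one.sub hHsymm).smul _)).eq
  rw [hZsymm, hZ', hHid.smul_add_smul_one_sub_mul, trace_add, trace_smul_add_smul_one_sub, htrH,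
    Fintype.card_fin]
  field_simp
  ring
end

section
/- Let n ≥ 2 and let W = (n−1)^{-1}(𝟙𝟙ᵀ − I) be the row-normalized weight matrix of the complete graph on n vertices. Let H be any symmetric idempotent n×n real matrix with H𝟙 = 𝟙. Then for every ρ ∈ ℝ, (I − H)(I − ρW) = (1 + ρ/(n−1))(I − H). -/
open Matrix BigOperators

namespace Matrix

variable {ι R : Type*} [Fintype ι] [CommRing R]

theorem mul_of_const_one_of_mulVec_one {H : Matrix ι ι R} (hH : H *ᵥ (fun _ => 1) = fun _ => 1) :
    H * of (fun _ _ : ι => (1 : R)) = of (fun _ _ => 1) := by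
  ext i j
  simpa [mul_apply, mulVec, dotProduct] using congrFun hH i

/-- Since `H` fixes the constants, `1 - H` kills the all-ones matrix and so sees `J - 1` as `-1`. -/
theorem one_sub_mul_of_const_one_sub_one [DecidableEq ι] {H : Matrix ι ι R}
    (hH : H *ᵥ (fun _ => 1) = fun _ => 1) :
    (1 - H) * (of (fun _ _ : ι => (1 : R)) - 1) = -(1 - H) := by
  rw [sub_mul, mul_sub, mul_sub, mul_of_const_one_of_mulVec_one hH, one_mul, one_mul, mul_one]
  abel

theorem one_sub_mul_one_sub_smul_of_const_one_sub_one [DecidableEq ι] {H : Matrix ι ι R}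
    (hH : H *ᵥ (fun _ => 1) = fun _ => 1) (c : R) :
    (1 - H) * (1 - c • (of (fun _ _ : ι => (1 : R)) - 1)) = (1 + c) • (1 - H) := by
  rw [mul_sub, mul_one, Matrix.mul_smul, one_sub_mul_of_const_one_sub_one hH, smul_neg,
    sub_neg_eq_add, add_smul, one_smul]

end Matrix

theorem complete_graph_residual_factor_general (n : ℕ)
    (W H : Matrix (Fin n) (Fin n) ℝ)
    (hW : W = ((n : ℝ) - 1)⁻¹ • (Matrix.of (fun _ _ : Fin n => (1 : ℝ)) - 1))
    (hH_one : H.mulVec (fun _ => (1 : ℝ)) = fun _ => (1 : ℝ)) :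
    ∀ ρ : ℝ, (1 - H) * (1 - ρ • W) = (1 + ρ / ((n : ℝ) - 1)) • (1 - H) := by
  intro ρ
  rw [hW, smul_smul, div_eq_mul_inv]
  exact one_sub_mul_one_sub_smul_of_const_one_sub_one hH_one _

/-- For the complete graph on n ≥ 2 vertices with W = (n−1)⁻¹(𝟙𝟙ᵀ − I), and any
symmetric idempotent H with H𝟙 = 𝟙: (I − H)(I − ρW) = (1 + ρ/(n−1))(I − H) for
every ρ. -/
theorem complete_graph_residual_factor (n : ℕ) (hn : 2 ≤ n)
    (W H : Matrix (Fin n) (Fin n) ℝ)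
    (hW : W = ((n : ℝ) - 1)⁻¹ • (Matrix.of (fun _ _ : Fin n => (1 : ℝ)) - 1))
    (hH_symm : Hᵀ = H) (hH_idem : H * H = H)
    (hH_one : H.mulVec (fun _ => (1 : ℝ)) = fun _ => (1 : ℝ)) :
    ∀ ρ : ℝ, (1 - H) * (1 - ρ • W) = (1 + ρ / ((n : ℝ) - 1)) • (1 - H) :=
  complete_graph_residual_factor_general n W H hW hH_one
end
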